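/- The function h has q-Λ-variation at most 1: V_{Λ,q}(h) ≤ Σ_{n=2}^∞ V_{Λ,q}(h_n) ≤ 1. In particular h belongs to the Waterman–Shiba class ΛBV^{(q)} and, since h(0) = 0, its norm satisfies ‖h‖_{Λ,q} = |h(0)| + V_{Λ,q}(h) ≤ 1. -/

import Mathlib

open Filter Set
open scoped ENNReal Classical

noncomputable section

/-- `Λ = （λ_i)_{i≥1}` is a Waterman sequence: positive, nondecreasing, `λ_1 = 1`,
and `∑ 1/λ_i = ∞`. -/
def WatermanSeq (lam : ℕ → ℝ) : Prop :=
  (∀ i, 0 < lam i) ∧ Monotone lam ∧ lam 1 = 1 ∧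
    Tendsto (fun n => ∑ i ∈ Finset.Icc 1 n, 1 / lam i) atTop atTop

/-- `Λ(M) = ∑_{i=1}^{M} 1/λ_i`. -/
def LamSum (lam : ℕ → ℝ) (M : ℕ) : ℝ := ∑ i ∈ Finset.Icc 1 M, 1 / lam i

/-- `{[a i, b i]}_{i < m}` is a finite family of pairwise non-overlapping closed
subintervals of `[0,1]`. -/
def NonOverlapping (m : ℕ) (a b : ℕ → ℝ) : Prop :=
  (∀ i < m, 0 ≤ a i ∧ a i ≤ b i ∧ b i ≤ 1) ∧
    ∀ i < m, ∀ j < m, i ≠ j → b i ≤ a j ∨ b j ≤ a i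

/-- `(∑_{i=1}^m |f(I_i)|^s / λ_i)^{1/s}` for the family `I_i = [a i, b i]`. -/
def vSum (lam : ℕ → ℝ) (s : ℝ) (f : ℝ → ℝ) (m : ℕ) (a b : ℕ → ℝ) : ℝ :=
  (∑ i ∈ Finset.range m, |f (b i) - f (a i)| ^ s / lam (i + 1)) ^ (1 / s)

/-- The `s`-`Λ`-variation `V_{Λ,s}(f)`, an element of `[0,∞]`. -/
def variation (lam : ℕ → ℝ) (s : ℝ) (f : ℝ → ℝ) : ℝ≥0∞ :=
  ⨆ (m : ℕ) (a : ℕ → ℝ) (b : ℕ → ℝ) (_ : NonOverlapping m a b),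
    ENNReal.ofReal (vSum lam s f m a b)

/-- `M_n = 2^(3n-1)`. -/
def Mseq (n : ℕ) : ℕ := 2 ^ (3 * n - 1)

/-- `b_{n,j} = 2^{-n} + (2j-2)/2^{4n}`. -/
def bb (n j : ℕ) : ℝ := ((2 : ℝ) ^ n)⁻¹ + (2 * (j : ℝ) - 2) / 2 ^ (4 * n)

/-- `c_{n,j} = 2^{-n} + (2j-1)/2^{4n}`. -/
def cc (n j : ℕ) : ℝ := ((2 : ℝ) ^ n)⁻¹ + (2 * (j : ℝ) - 1) / 2 ^ (4 * n)

/-- The function `h_n`. -/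
def hfun (lam : ℕ → ℝ) (q : ℝ) (n : ℕ) (y : ℝ) : ℝ :=
  if ∃ j, 1 ≤ j ∧ j ≤ (Mseq n - 2) / 2 ∧ y ∈ Set.Ico (bb n j) (cc n j) then
    ((2 : ℝ) ^ n)⁻¹ * LamSum lam (Mseq n) ^ (-(1 / q))
  else 0

/-- `h = ∑_{n=2}^∞ h_n`. -/
def hh (lam : ℕ → ℝ) (q : ℝ) (y : ℝ) : ℝ := ∑' n : ℕ, hfun lam q (n + 2) y

/-- The sequence `r`: `r_{2k} = c_{k+2,(M_{k+2}-2)/2}`, `r_{2k+1} = b_{k+2,(M_{k+2}-2)/2}`. -/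
def rr (i : ℕ) : ℝ :=
  if i % 2 = 0 then cc (i / 2 + 2) ((Mseq (i / 2 + 2) - 2) / 2)
  else bb (i / 2 + 2) ((Mseq (i / 2 + 2) - 2) / 2)

/-- `f(J_i) = f(r_{i-1}) - f(r_i)` where `J_i = [r_i, r_{i-1}]` (for `i ≥ 1`). -/
def incrJ (f : ℝ → ℝ) (i : ℕ) : ℝ := f (rr (i - 1)) - f (rr i)

/-- `p_{(n_k)}(j) = (-1)^{k+1}` if `j = n_k` for some `k ≥ 1`, and `0` otherwise. -/
def psgn (nseq : ℕ → ℕ) (j : ℕ) : ℝ :=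
  if h : ∃ k, 1 ≤ k ∧ nseq k = j then (-1 : ℝ) ^ (h.choose + 1) else 0

/-- The `j`-th (here `j = m+1`, `m : ℕ`) term of the series defining `L_{(n_k)}`:
`p_{(n_k)}(j) ∑_{i=1}^2 (-1)^i f(J_{2(j-1)+i}) |h(J_{2(j-1)+i})| / λ_{2(j-1)+i}`. -/
def Lterm (lam : ℕ → ℝ) (q : ℝ) (nseq : ℕ → ℕ) (f : ℝ → ℝ) (m : ℕ) : ℝ :=
  psgn nseq (m + 1) * ∑ i ∈ Finset.Icc 1 2,
    (-1 : ℝ) ^ i * incrJ f (2 * m + i) * |incrJ (hh lam q) (2 * m + i)| / lam (2 * m + i)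

/-- The functional `L_{(n_k)}(f) = f(J') + ∑_{j=1}^∞ (…)`, with `J' = [3/8, 3/8 + 2⁻⁸]`. -/
def Lfun (lam : ℕ → ℝ) (q : ℝ) (nseq : ℕ → ℕ) (f : ℝ → ℝ) : ℝ :=
  (f (3 / 8 + 1 / 2 ^ 8) - f (3 / 8)) + ∑' m : ℕ, Lterm lam q nseq f m

/-- The tent function `f_l`. -/
def tent (nseq : ℕ → ℕ) (l : ℕ) (x : ℝ) : ℝ :=
  if 3 / 8 < x ∧ x ≤ 3 / 8 + 1 / 2 ^ 8 then psgn nseq l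
  else if rr (2 * l) ≤ x ∧ x ≤ rr (2 * l - 1) then
    (x - rr (2 * l)) / (rr (2 * l - 1) - rr (2 * l))
  else if rr (2 * l - 1) ≤ x ∧ x ≤ rr (2 * l - 2) then
    (rr (2 * l - 2) - x) / (rr (2 * l - 2) - rr (2 * l - 1))
  else 0

/-!
Each `h_n` is a step function with values in `{0, d_n}`, `d_n = 2^{-n} Λ(M_n)^{-1/q}`, whose jumps
lie in a set of at most `M_n` points. In a non-overlapping family, `h_n` changes only on intervals
containing such a point, hence on at most `M_n` of them; as `λ` is nondecreasing their weights
`1/λ_i` add up to at most `Λ(M_n)`, so `V_{Λ,q}(h_n) ≤ d_n Λ(M_n)^{1/q} = 2^{-n}`.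
The sum `(∑ |f(I_i)|^q / λ_i)^{1/q}` is the `ℓ^q` norm of `(f(I_i) λ_i^{-1/q})_i`, which is linear
in `f`, so the triangle inequality for the series `h = ∑ h_n` in `ℓ^q` gives
`V_{Λ,q}(h) ≤ ∑ V_{Λ,q}(h_n) ≤ ∑_{n ≥ 2} 2^{-n} = 1/2`.
-/

open Finset in
theorem Finset.sum_le_sum_range_card_of_antitone {M : Type*} [AddCommMonoid M] [PartialOrder M]
    [IsOrderedAddMonoid M] {g : ℕ → M} (hg : Antitone g) (s : Finset ℕ) :
    ∑ i ∈ s, g i ≤ ∑ i ∈ range #s, g i := by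
  set r := range #s
  calc ∑ i ∈ s, g i = ∑ i ∈ s ∩ r, g i + ∑ i ∈ s \ r, g i := (sum_inter_add_sum_sdiff s r g).symm
    _ ≤ ∑ i ∈ s ∩ r, g i + #(s \ r) • g #s := by
        gcongr
        exact sum_le_card_nsmul _ _ _ fun i hi => hg (by simpa [r] using (mem_sdiff.1 hi).2)
    _ = ∑ i ∈ r ∩ s, g i + #(r \ s) • g #s := by rw [inter_comm, card_sdiff_comm (by simp [r])]
    _ ≤ ∑ i ∈ r ∩ s, g i + ∑ i ∈ r \ s, g i := by
        gcongr
        exact card_nsmul_le_sum _ _ _ fun i hi => hg (mem_range.1 (mem_sdiff.1 hi).1).le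
    _ = ∑ i ∈ r, g i := sum_inter_add_sum_sdiff r s g

section LamSum

variable {lam : ℕ → ℝ}

lemma lamSum_eq_sum_range (M : ℕ) : LamSum lam M = ∑ i ∈ Finset.range M, 1 / lam (i + 1) := by
  rw [LamSum, Finset.range_eq_Ico, Finset.sum_Ico_add' (fun i => 1 / lam i), zero_add,
    Finset.Ico_add_one_right_eq_Icc]

lemma lamSum_mono (hpos : ∀ i, 0 < lam i) : Monotone (LamSum lam) := fun _ _ hMN =>
  Finset.sum_le_sum_of_subset_of_nonneg (Finset.Icc_subset_Icc le_rfl hMN)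
    fun i _ _ => (one_div_pos.2 (hpos i)).le

lemma lamSum_pos (hpos : ∀ i, 0 < lam i) {M : ℕ} (hM : 1 ≤ M) : 0 < LamSum lam M :=
  Finset.sum_pos (fun i _ => one_div_pos.2 (hpos i)) (Finset.nonempty_Icc.2 hM)

lemma one_le_lamSum (hpos : ∀ i, 0 < lam i) (h1 : lam 1 = 1) {M : ℕ} (hM : 1 ≤ M) :
    1 ≤ LamSum lam M := by
  simpa [LamSum, h1] using lamSum_mono hpos hM

lemma sum_one_div_le_lamSum_card (hpos : ∀ i, 0 < lam i) (hmono : Monotone lam)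
    (s : Finset ℕ) : ∑ i ∈ s, 1 / lam (i + 1) ≤ LamSum lam s.card := by
  rw [lamSum_eq_sum_range]
  exact Finset.sum_le_sum_range_card_of_antitone
    (fun i j hij => one_div_le_one_div_of_le (hpos _) (hmono (by omega))) s

end LamSum

def JumpsWithin (f : ℝ → ℝ) (J : Finset ℝ) : Prop :=
  ∀ ⦃x y⦄, x ≤ y → f x ≠ f y → ∃ z ∈ J, z ∈ Ioc x y

section Variation

variable {lam : ℕ → ℝ} {s : ℝ} {f : ℝ → ℝ} {m : ℕ} {a b : ℕ → ℝ}

open Finset in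
lemma NonOverlapping.card_filter_ne_le (hab : NonOverlapping m a b) {J : Finset ℝ}
    (hJ : JumpsWithin f J) : #{i ∈ range m | f (a i) ≠ f (b i)} ≤ #J := by
  have hwitness : ∀ i ∈ {i ∈ range m | f (a i) ≠ f (b i)}, ∃ z ∈ J, z ∈ Ioc (a i) (b i) := by
    intro i hi
    rw [mem_filter, Finset.mem_range] at hi
    exact hJ (hab.1 i hi.1).2.1 hi.2
  choose! z hzJ hz using hwitness
  refine card_le_card_of_injOn z hzJ fun i hi j hj hij => ?_
  by_contra hne
  have him := (mem_filter.1 hi).1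
  have hjm := (mem_filter.1 hj).1
  rw [Finset.mem_range] at him hjm
  -- the half-open intervals `(a i, b i]` are pairwise disjoint
  rcases hab.2 i him j hjm hne with h | h
  · linarith [(hz i hi).2, (hz j hj).1]
  · linarith [(hz i hi).1, (hz j hj).2]

lemma NonOverlapping.vSum_le_of_jumpsWithin (hab : NonOverlapping m a b) (hs : 0 < s)
    (hpos : ∀ i, 0 < lam i) (hmono : Monotone lam) {J : Finset ℝ} (hJ : JumpsWithin f J)
    {d : ℝ} (hd : ∀ x y, |f y - f x| ≤ d) :
    vSum lam s f m a b ≤ d * LamSum lam J.card ^ (1 / s) := by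
  have hd0 : 0 ≤ d := by simpa using hd 0 0
  have hsum : ∑ i ∈ Finset.range m, |f (b i) - f (a i)| ^ s / lam (i + 1)
      ≤ d ^ s * LamSum lam J.card :=
    calc ∑ i ∈ Finset.range m, |f (b i) - f (a i)| ^ s / lam (i + 1)
        = ∑ i ∈ Finset.range m with f (a i) ≠ f (b i), |f (b i) - f (a i)| ^ s / lam (i + 1) := by
          refine (Finset.sum_filter_of_ne fun i _ hi => ?_).symm
          contrapose! hi
          rw [hi, sub_self, abs_zero, Real.zero_rpow hs.ne', zero_div]
      _ ≤ ∑ i ∈ Finset.range m with f (a i) ≠ f (b i), d ^ s * (1 / lam (i + 1)) := by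
          gcongr with i
          rw [mul_one_div]
          gcongr
          · exact (hpos _).le
          · exact hd _ _
      _ ≤ d ^ s * LamSum lam J.card := by
          rw [← Finset.mul_sum]
          gcongr
          exact (sum_one_div_le_lamSum_card hpos hmono _).trans
            (lamSum_mono hpos (hab.card_filter_ne_le hJ))
  have hL : 0 ≤ LamSum lam J.card :=
    Finset.sum_nonneg fun i _ => (one_div_pos.2 (hpos i)).le
  calc vSum lam s f m a b ≤ (d ^ s * LamSum lam J.card) ^ (1 / s) :=
        Real.rpow_le_rpow (Finset.sum_nonneg fun i _ => div_nonneg (by positivity) (hpos _).le)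
          hsum (by positivity)
    _ = d * LamSum lam J.card ^ (1 / s) := by
        rw [Real.mul_rpow (by positivity) hL, ← Real.rpow_mul hd0, mul_one_div_cancel hs.ne',
          Real.rpow_one]

lemma ofReal_vSum_le_variation (hab : NonOverlapping m a b) :
    ENNReal.ofReal (vSum lam s f m a b) ≤ variation lam s f :=
  le_iSup_of_le m <| le_iSup_of_le a <| le_iSup_of_le b <| le_iSup_of_le hab le_rfl

lemma variation_le_ofReal {C : ℝ}
    (hC : ∀ m a b, NonOverlapping m a b → vSum lam s f m a b ≤ C) :
    variation lam s f ≤ ENNReal.ofReal C :=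
  iSup_le fun m => iSup_le fun a => iSup_le fun b => iSup_le fun hab =>
    ENNReal.ofReal_le_ofReal (hC m a b hab)

end Variation

section Minkowski

variable {lam : ℕ → ℝ} {s : ℝ} {m : ℕ} {a b : ℕ → ℝ}

def weightedIncrements (lam : ℕ → ℝ) (s : ℝ) (f : ℝ → ℝ) (m : ℕ) (a b : ℕ → ℝ) :
    PiLp (ENNReal.ofReal s) fun _ : Fin m => ℝ :=
  WithLp.toLp _ fun i => (f (b i) - f (a i)) * lam (i + 1) ^ (-(1 / s))

lemma norm_weightedIncrements (hs : 0 < s) (hpos : ∀ i, 0 < lam i) (f : ℝ → ℝ) :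
    ‖weightedIncrements lam s f m a b‖ = vSum lam s f m a b := by
  have hs' : (ENNReal.ofReal s).toReal = s := ENNReal.toReal_ofReal hs.le
  rw [PiLp.norm_eq_sum (hs'.symm ▸ hs), hs', vSum,
    ← Fin.sum_univ_eq_sum_range (fun i => |f (b i) - f (a i)| ^ s / lam (i + 1)) m]
  congr 1
  refine Finset.sum_congr rfl fun i _ => ?_
  have hweight : (lam (i + 1) ^ (-(1 / s))) ^ s = (lam (i + 1))⁻¹ := by
    rw [← Real.rpow_mul (hpos _).le, neg_mul, one_div_mul_cancel hs.ne', Real.rpow_neg_one]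
  rw [weightedIncrements, PiLp.toLp_apply, Real.norm_eq_abs, abs_mul,
    abs_of_nonneg (Real.rpow_nonneg (hpos _).le _), Real.mul_rpow (abs_nonneg _)
    (Real.rpow_nonneg (hpos _).le _), hweight, div_eq_mul_inv]

lemma weightedIncrements_tsum {f : ℕ → ℝ → ℝ} (hf : ∀ y, Summable fun n => f n y) :
    weightedIncrements lam s (fun y => ∑' n, f n y) m a b
      = ∑' n, weightedIncrements lam s (f n) m a b := by
  have hcomp : ∀ i : Fin m,
      Summable fun n => (f n (b i) - f n (a i)) * lam (i + 1) ^ (-(1 / s)) :=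
    fun i => ((hf _).sub (hf _)).mul_right _
  let e := (PiLp.continuousLinearEquiv (ENNReal.ofReal s) ℝ fun _ : Fin m => ℝ).symm
  change e _ = ∑' n, e _
  rw [← e.map_tsum]
  congr 1
  funext i
  rw [tsum_apply (Pi.summable.2 hcomp), tsum_mul_right, (hf _).tsum_sub (hf _)]

lemma vSum_nonneg (hpos : ∀ i, 0 < lam i) (f : ℝ → ℝ) : 0 ≤ vSum lam s f m a b :=
  Real.rpow_nonneg (Finset.sum_nonneg fun i _ => div_nonneg (by positivity) (hpos _).le) _

lemma vSum_tsum_le (hs : 1 ≤ s) (hpos : ∀ i, 0 < lam i) {f : ℕ → ℝ → ℝ}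
    (hf : ∀ y, Summable fun n => f n y) (hsum : Summable fun n => vSum lam s (f n) m a b) :
    vSum lam s (fun y => ∑' n, f n y) m a b ≤ ∑' n, vSum lam s (f n) m a b := by
  have : Fact (1 ≤ ENNReal.ofReal s) := ⟨by simpa using hs⟩
  have hs0 : 0 < s := by linarith
  simp only [← norm_weightedIncrements hs0 hpos] at hsum ⊢
  rw [weightedIncrements_tsum hf]
  exact norm_tsum_le_tsum_norm hsum

lemma variation_tsum_le (hs : 1 ≤ s) (hpos : ∀ i, 0 < lam i) {f : ℕ → ℝ → ℝ}
    (hf : ∀ y, Summable fun n => f n y) :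
    variation lam s (fun y => ∑' n, f n y) ≤ ∑' n, variation lam s (f n) := by
  refine iSup_le fun m => iSup_le fun a => iSup_le fun b => iSup_le fun hab => ?_
  refine le_trans ?_ (ENNReal.tsum_le_tsum fun n => ofReal_vSum_le_variation hab)
  by_cases htop : ∑' n, ENNReal.ofReal (vSum lam s (f n) m a b) = ⊤
  · simp [htop]
  have hsum := ENNReal.summable_toReal htop
  simp only [ENNReal.toReal_ofReal (vSum_nonneg hpos _)] at hsum
  rw [← ENNReal.ofReal_tsum_of_nonneg (fun n => vSum_nonneg hpos _) hsum]
  exact ENNReal.ofReal_le_ofReal (vSum_tsum_le hs hpos hf hsum)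

end Minkowski

section StepFunctions

variable {lam : ℕ → ℝ} {q : ℝ}

lemma one_le_Mseq (n : ℕ) : 1 ≤ Mseq n := Nat.one_le_two_pow

def jumpSet (n : ℕ) : Finset ℝ :=
  (Finset.Icc 1 ((Mseq n - 2) / 2)).image (bb n) ∪ (Finset.Icc 1 ((Mseq n - 2) / 2)).image (cc n)

lemma card_jumpSet_le (n : ℕ) : (jumpSet n).card ≤ Mseq n := by
  refine (Finset.card_union_le _ _).trans ?_
  grw [Finset.card_image_le, Finset.card_image_le, Nat.card_Icc]
  omega

lemma jumpsWithin_hfun (n : ℕ) : JumpsWithin (hfun lam q n) (jumpSet n) := by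
  intro x y hxy hne
  unfold hfun at hne
  split_ifs at hne with hx hy hy
  · exact absurd rfl hne
  · obtain ⟨j, hj1, hj2, hbx, hxc⟩ := hx
    refine ⟨cc n j, Finset.mem_union_right _ (Finset.mem_image_of_mem _ (by simp [hj1, hj2])),
      hxc, ?_⟩
    by_contra! hyc
    exact hy ⟨j, hj1, hj2, hbx.trans hxy, hyc⟩
  · obtain ⟨j, hj1, hj2, hby, hyc⟩ := hy
    refine ⟨bb n j, Finset.mem_union_left _ (Finset.mem_image_of_mem _ (by simp [hj1, hj2])),
      ?_, hby⟩
    by_contra! hbx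
    exact hx ⟨j, hj1, hj2, hbx, hxy.trans_lt hyc⟩
  · exact absurd rfl hne

lemma hfun_eq_zero_or (n : ℕ) (y : ℝ) :
    hfun lam q n y = 0 ∨ hfun lam q n y = ((2 : ℝ) ^ n)⁻¹ * LamSum lam (Mseq n) ^ (-(1 / q)) := by
  unfold hfun
  split_ifs <;> simp

lemma hfun_zero (n : ℕ) : hfun lam q n 0 = 0 := by
  rw [hfun, if_neg]
  rintro ⟨j, hj1, -, hbj, -⟩
  have hj : (1 : ℝ) ≤ j := by exact_mod_cast hj1
  have : 0 ≤ (2 * (j : ℝ) - 2) / 2 ^ (4 * n) := div_nonneg (by linarith) (by positivity)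
  have : (0 : ℝ) < ((2 : ℝ) ^ n)⁻¹ := by positivity
  unfold bb at hbj
  linarith

lemma abs_sub_hfun_le (hpos : ∀ i, 0 < lam i) (n : ℕ) (x y : ℝ) :
    |hfun lam q n y - hfun lam q n x| ≤ ((2 : ℝ) ^ n)⁻¹ * LamSum lam (Mseq n) ^ (-(1 / q)) := by
  have hd : 0 ≤ ((2 : ℝ) ^ n)⁻¹ * LamSum lam (Mseq n) ^ (-(1 / q)) :=
    mul_nonneg (by positivity) (Real.rpow_nonneg (lamSum_pos hpos (one_le_Mseq n)).le _)
  rcases hfun_eq_zero_or (lam := lam) (q := q) n y with hy | hy <;>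
    rcases hfun_eq_zero_or (lam := lam) (q := q) n x with hx | hx <;>
    rw [hx, hy] <;>
    simp only [sub_self, sub_zero, zero_sub, abs_neg, abs_zero, abs_of_nonneg hd, le_refl, hd]

lemma abs_hfun_le (hpos : ∀ i, 0 < lam i) (h1 : lam 1 = 1) (hq : 0 < q) (n : ℕ) (y : ℝ) :
    |hfun lam q n y| ≤ ((2 : ℝ) ^ n)⁻¹ := by
  have hΛ : LamSum lam (Mseq n) ^ (-(1 / q)) ≤ 1 :=
    Real.rpow_le_one_of_one_le_of_nonpos (one_le_lamSum hpos h1 (one_le_Mseq n))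
      (by simp [hq.le])
  calc |hfun lam q n y| = |hfun lam q n y - hfun lam q n 0| := by rw [hfun_zero, sub_zero]
    _ ≤ ((2 : ℝ) ^ n)⁻¹ * LamSum lam (Mseq n) ^ (-(1 / q)) := abs_sub_hfun_le hpos n 0 y
    _ ≤ ((2 : ℝ) ^ n)⁻¹ := mul_le_of_le_one_right (by positivity) hΛ

lemma hfun_summable (hpos : ∀ i, 0 < lam i) (h1 : lam 1 = 1) (hq : 0 < q) (y : ℝ) :
    Summable fun n => hfun lam q (n + 2) y :=
  Summable.of_norm_bounded summable_geometric_two fun n =>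
    (abs_hfun_le hpos h1 hq (n + 2) y).trans <| by
      rw [one_div, inv_pow]
      gcongr
      exacts [one_le_two, by omega]

lemma vSum_hfun_le (hpos : ∀ i, 0 < lam i) (hmono : Monotone lam) (hq : 0 < q) (n : ℕ)
    {m : ℕ} {a b : ℕ → ℝ} (hab : NonOverlapping m a b) :
    vSum lam q (hfun lam q n) m a b ≤ ((2 : ℝ) ^ n)⁻¹ := by
  have hΛ := lamSum_pos hpos (one_le_Mseq n)
  calc vSum lam q (hfun lam q n) m a b
      ≤ ((2 : ℝ) ^ n)⁻¹ * LamSum lam (Mseq n) ^ (-(1 / q))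
          * LamSum lam (jumpSet n).card ^ (1 / q) :=
        hab.vSum_le_of_jumpsWithin hq hpos hmono (jumpsWithin_hfun n) (abs_sub_hfun_le hpos n)
    _ ≤ ((2 : ℝ) ^ n)⁻¹ * LamSum lam (Mseq n) ^ (-(1 / q)) * LamSum lam (Mseq n) ^ (1 / q) := by
        gcongr
        · exact Finset.sum_nonneg fun i _ => (one_div_pos.2 (hpos i)).le
        · exact lamSum_mono hpos (card_jumpSet_le n)
    _ = ((2 : ℝ) ^ n)⁻¹ := by
        rw [mul_assoc, ← Real.rpow_add hΛ, neg_add_cancel, Real.rpow_zero, mul_one]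

lemma variation_hfun_le (hpos : ∀ i, 0 < lam i) (hmono : Monotone lam) (hq : 0 < q) (n : ℕ) :
    variation lam q (hfun lam q n) ≤ 2⁻¹ ^ n :=
  (variation_le_ofReal fun _ _ _ hab => vSum_hfun_le hpos hmono hq n hab).trans_eq
    (by simp [ENNReal.inv_pow])

end StepFunctions

lemma ENNReal.tsum_inv_two_pow_add_two : ∑' n : ℕ, (2⁻¹ : ℝ≥0∞) ^ (n + 2) = 2⁻¹ := by
  simp only [pow_add, ENNReal.tsum_mul_right, ENNReal.tsum_geometric, ENNReal.one_sub_inv_two,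
    inv_inv]
  rw [pow_two, ← mul_assoc, ENNReal.mul_inv_cancel two_ne_zero ENNReal.ofNat_ne_top, one_mul]

theorem stmt3_general (lam : ℕ → ℝ) (hlam : WatermanSeq lam) (q : ℝ) (hq : 1 < q) :
    variation lam q (hh lam q) ≤ ∑' n : ℕ, variation lam q (hfun lam q (n + 2)) ∧
    (∑' n : ℕ, variation lam q (hfun lam q (n + 2))) ≤ 1 ∧
    variation lam q (hh lam q) < ⊤ ∧
    ENNReal.ofReal |hh lam q 0| + variation lam q (hh lam q) ≤ 1 := by
  obtain ⟨hpos, hmono, h1, -⟩ := hlam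
  have hq0 : 0 < q := by linarith
  have hsub : variation lam q (hh lam q) ≤ ∑' n : ℕ, variation lam q (hfun lam q (n + 2)) :=
    variation_tsum_le hq.le hpos (hfun_summable hpos h1 hq0)
  have hsum : (∑' n : ℕ, variation lam q (hfun lam q (n + 2))) ≤ 1 :=
    calc (∑' n : ℕ, variation lam q (hfun lam q (n + 2)))
        ≤ ∑' n : ℕ, (2⁻¹ : ℝ≥0∞) ^ (n + 2) :=
          ENNReal.tsum_le_tsum fun n => variation_hfun_le hpos hmono hq0 (n + 2)
      _ = 2⁻¹ := ENNReal.tsum_inv_two_pow_add_two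
      _ ≤ 1 := ENNReal.inv_le_one.2 one_le_two
  have hle_one := hsub.trans hsum
  have hh_zero : hh lam q 0 = 0 := by simp [hh, hfun_zero]
  refine ⟨hsub, hsum, hle_one.trans_lt ENNReal.one_lt_top, ?_⟩
  rwa [hh_zero, abs_zero, ENNReal.ofReal_zero, zero_add]

/-- `V_{Λ,q}(h) ≤ ∑_{n=2}^∞ V_{Λ,q}(h_n) ≤ 1`; in particular
`h ∈ ΛBV^{(q)}` and `‖h‖_{Λ,q} = |h(0)| + V_{Λ,q}(h) ≤ 1`. -/
theorem stmt3 (lam : ℕ → ℝ) (hlam : WatermanSeq lam) (p q : ℝ)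
    (hp : 1 < p) (hq : 1 < q) (hpq : 1 / p + 1 / q = 1) :
    variation lam q (hh lam q) ≤ ∑' n : ℕ, variation lam q (hfun lam q (n + 2)) ∧
    (∑' n : ℕ, variation lam q (hfun lam q (n + 2))) ≤ 1 ∧
    variation lam q (hh lam q) < ⊤ ∧
    ENNReal.ofReal |hh lam q 0| + variation lam q (hh lam q) ≤ 1 :=
  stmt3_general lam hlam q hq
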